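/- Let n ≥ 3 and let v be a positive smooth function on a domain Ω ⊂ ℝⁿ satisfying v·Δv = (n/2)(|∇v|² − 1). Suppose at a point x₀ ∈ Ω there is a unit vector e with ∂²_{ee}v(x₀) = 0, v(x₀) ≤ L·∂_e v(x₀) for some L > 0, and ∂_e v(x₀) > 0. Then the Ricci component of g = v⁻²g_E in the direction v·e at x₀ satisfies R_{ee} ≤ −((n−2)/2)·(∂_e v(x₀))², and hence R_{ee} → −∞ along any sequence of such points where ∂_e v → ∞. -/

import Mathlib

open scoped BigOperators

noncomputable def pd {n : ℕ} (i : Fin n) (f : (Fin n → ℝ) → ℝ) (x : Fin n → ℝ) : ℝ :=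
  fderiv ℝ f x (Pi.single i 1)

noncomputable def pd2 {n : ℕ} (i j : Fin n) (f : (Fin n → ℝ) → ℝ) (x : Fin n → ℝ) : ℝ :=
  pd i (fun y => pd j f y) x

noncomputable def lap {n : ℕ} (f : (Fin n → ℝ) → ℝ) (x : Fin n → ℝ) : ℝ :=
  ∑ i, pd2 i i f x

noncomputable def gradSq {n : ℕ} (f : (Fin n → ℝ) → ℝ) (x : Fin n → ℝ) : ℝ :=
  ∑ i, (pd i f x) ^ 2

/-- Directional derivative `∂_e f`. -/
noncomputable def dirD {n : ℕ} (e : Fin n → ℝ) (f : (Fin n → ℝ) → ℝ) (x : Fin n → ℝ) : ℝ :=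
  fderiv ℝ f x e

/-- Second directional derivative `∂²_{ee} f`. -/
noncomputable def dirD2 {n : ℕ} (e : Fin n → ℝ) (f : (Fin n → ℝ) → ℝ) (x : Fin n → ℝ) : ℝ :=
  fderiv ℝ (fun y => fderiv ℝ f y e) x e

/-- The Ricci component of `g = v⁻² g_E` in the `g`-unit direction `v·e`
(for a Euclidean-unit vector `e`):
`R_{ee} = (n−2) v ∂²_{ee}v − (n−2)/2 · |∇v|² − n/2`. -/
noncomputable def ricDir {n : ℕ} (v : (Fin n → ℝ) → ℝ) (e : Fin n → ℝ)
    (x : Fin n → ℝ) : ℝ :=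
  ((n : ℝ) - 2) * v x * dirD2 e v x - (((n : ℝ) - 2) / 2) * gradSq v x - (n : ℝ) / 2

lemma dirD_eq_sum_mul_pd {n : ℕ} (e : Fin n → ℝ) (f : (Fin n → ℝ) → ℝ) (x : Fin n → ℝ) :
    dirD e f x = ∑ i, e i * pd i f x := by
  conv_lhs => rw [dirD, pi_eq_sum_univ' e, map_sum]
  simp only [map_smul, smul_eq_mul, pd]

lemma sq_dirD_le_sum_sq_mul_gradSq {n : ℕ} (e : Fin n → ℝ) (f : (Fin n → ℝ) → ℝ)
    (x : Fin n → ℝ) : dirD e f x ^ 2 ≤ (∑ i, e i ^ 2) * gradSq f x := by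
  rw [dirD_eq_sum_mul_pd, gradSq]
  exact Finset.sum_mul_sq_le_sq_mul_sq _ _ _

lemma ricDir_le_of_dirD2_eq_zero {n : ℕ} (hn : 2 ≤ n) {v : (Fin n → ℝ) → ℝ}
    {e : Fin n → ℝ} {x : Fin n → ℝ} (he : ∑ i, e i ^ 2 = 1) (h2 : dirD2 e v x = 0) :
    ricDir v e x ≤ -(((n : ℝ) - 2) / 2) * dirD e v x ^ 2 := by
  have hcs : dirD e v x ^ 2 ≤ gradSq v x := by
    simpa [he] using sq_dirD_le_sum_sq_mul_gradSq e v x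
  have hn' : (2 : ℝ) ≤ n := by exact_mod_cast hn
  rw [ricDir, h2]
  nlinarith

lemma Filter.Tendsto.atBot_of_le_neg_mul_sq {ι : Type*} {l : Filter ι} {f g : ι → ℝ} {c : ℝ}
    (hc : 0 < c) (hfg : ∀ k, f k ≤ -c * g k ^ 2) (hg : Tendsto g l atTop) :
    Tendsto f l atBot := by
  have hsq : Tendsto (fun k => c * g k ^ 2) l atTop :=
    ((tendsto_pow_atTop two_ne_zero).comp hg).const_mul_atTop hc
  refine tendsto_atBot_mono (fun k => ?_) (tendsto_neg_atTop_atBot.comp hsq)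
  simpa only [Function.comp_apply, neg_mul] using hfg k

theorem stmt16_general {n : ℕ} (hn : 3 ≤ n) (Ω : Set (Fin n → ℝ))
    (v : (Fin n → ℝ) → ℝ) :
    (∀ x₀ ∈ Ω, ∀ e : Fin n → ℝ, (∑ i, (e i) ^ 2) = 1 →
      dirD2 e v x₀ = 0 →
      (∃ L : ℝ, 0 < L ∧ v x₀ ≤ L * dirD e v x₀) →
      0 < dirD e v x₀ →
      ricDir v e x₀ ≤ -(((n : ℝ) - 2) / 2) * (dirD e v x₀) ^ 2) ∧
    (∀ (x : ℕ → Fin n → ℝ) (e : ℕ → Fin n → ℝ),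
      (∀ k, x k ∈ Ω ∧ (∑ i, (e k i) ^ 2) = 1 ∧ dirD2 (e k) v (x k) = 0 ∧
        (∃ L : ℝ, 0 < L ∧ v (x k) ≤ L * dirD (e k) v (x k)) ∧ 0 < dirD (e k) v (x k)) →
      Filter.Tendsto (fun k => dirD (e k) v (x k)) Filter.atTop Filter.atTop →
      Filter.Tendsto (fun k => ricDir v (e k) (x k)) Filter.atTop Filter.atBot) := by
  refine ⟨fun _ _ e he h2 _ _ => ricDir_le_of_dirD2_eq_zero (by omega) he h2,
    fun x e hk htend => ?_⟩
  have hn' : (3 : ℝ) ≤ n := by exact_mod_cast hn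
  exact htend.atBot_of_le_neg_mul_sq (by linarith)
    fun k => ricDir_le_of_dirD2_eq_zero (by omega) (hk k).2.1 (hk k).2.2.1

theorem stmt16 {n : ℕ} (hn : 3 ≤ n) (Ω : Set (Fin n → ℝ)) (hΩ : IsOpen Ω)
    (v : (Fin n → ℝ) → ℝ) (hv : ContDiffOn ℝ (⊤ : ℕ∞) v Ω)
    (hvpos : ∀ x ∈ Ω, 0 < v x)
    (hpde : ∀ x ∈ Ω, v x * lap v x = ((n : ℝ) / 2) * (gradSq v x - 1)) :
    (∀ x₀ ∈ Ω, ∀ e : Fin n → ℝ, (∑ i, (e i) ^ 2) = 1 →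
      dirD2 e v x₀ = 0 →
      (∃ L : ℝ, 0 < L ∧ v x₀ ≤ L * dirD e v x₀) →
      0 < dirD e v x₀ →
      ricDir v e x₀ ≤ -(((n : ℝ) - 2) / 2) * (dirD e v x₀) ^ 2) ∧
    (∀ (x : ℕ → Fin n → ℝ) (e : ℕ → Fin n → ℝ),
      (∀ k, x k ∈ Ω ∧ (∑ i, (e k i) ^ 2) = 1 ∧ dirD2 (e k) v (x k) = 0 ∧
        (∃ L : ℝ, 0 < L ∧ v (x k) ≤ L * dirD (e k) v (x k)) ∧ 0 < dirD (e k) v (x k)) →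
      Filter.Tendsto (fun k => dirD (e k) v (x k)) Filter.atTop Filter.atTop →
      Filter.Tendsto (fun k => ricDir v (e k) (x k)) Filter.atTop Filter.atBot) :=
  stmt16_general hn Ω v
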